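/- For any nonempty subset T ⊆ S and any orthonormal basis {|j⟩}_{j=1}^{2^N} of (ℂ²)^{⊗N}, the average over |ψ⟩ ∈ T of Σ_{j=1}^{2^N} |⟨j|ψ⟩|⁴ is at most (6^N/|T|)·(2/3)^N = 4^N/|T|. In particular, if |T| ≥ 6^{N(1−δ)} with constant δ > 0 satisfying (2/3)·6^δ < 1, then (1/|T|) Σ_{|ψ⟩∈T} 1/D^eff_ψ ≤ ((2/3)·6^δ)^N. -/

import Mathlib

/-!
The six states form a complex projective 2-design, which for one qubit is the identity
`∑ₛ |qₛ ⬝ᵥ w|⁴ = 2 ‖w‖⁴` (`w ∈ ℂ²`). Splitting off the first qubit, it turns the fourth moment of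
an `(N+1)`-qubit vector `v` into twice the squared `ℓ²`-norm (over `f`) of
`|⟨v₀|ψ_f⟩|² + |⟨v₁|ψ_f⟩|²`, so Minkowski's inequality and induction give
`∑_f |⟨v|ψ_f⟩|⁴ ≤ 2^N ‖v‖⁴` for every `v`. Summing over the `2^N` basis vectors and dropping the
states outside `T` bounds the total by `4^N`, and `4^N / 6^{N(1-δ)} = ((2/3)·6^δ)^N`.
-/

open scoped Matrix ComplexConjugate

/-- The six single-qubit states `|x^±⟩, |y^±⟩, |z^±⟩`: unit eigenvectors of the Pauli
matrices `σˣ, σʸ, σᶻ` with eigenvalues `±1`. -/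
noncomputable def qs : Fin 6 → Fin 2 → ℂ
  | 0 => ![(Real.sqrt 2 : ℂ)⁻¹, (Real.sqrt 2 : ℂ)⁻¹]
  | 1 => ![(Real.sqrt 2 : ℂ)⁻¹, -(Real.sqrt 2 : ℂ)⁻¹]
  | 2 => ![(Real.sqrt 2 : ℂ)⁻¹, Complex.I * (Real.sqrt 2 : ℂ)⁻¹]
  | 3 => ![(Real.sqrt 2 : ℂ)⁻¹, -(Complex.I * (Real.sqrt 2 : ℂ)⁻¹)]
  | 4 => ![1, 0]
  | 5 => ![0, 1]

/-- The product state `⊗_i |f i⟩ ∈ (ℂ²)^{⊗N}`; as `f` ranges over `Fin N → Fin 6`,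
these are exactly the `6^N` elements of `S`. -/
noncomputable def prodState {N : ℕ} (f : Fin N → Fin 6) : (Fin N → Fin 2) → ℂ :=
  fun x => ∏ i, qs (f i) (x i)

open Finset

lemma sum_pi_fin_succ {α M : Type*} [Fintype α] [AddCommMonoid M] {n : ℕ}
    (g : (Fin (n + 1) → α) → M) :
    ∑ x, g x = ∑ a, ∑ x : Fin n → α, g (Fin.cons a x) := by
  rw [← (Fin.consEquiv fun _ => α).sum_comp, Fintype.sum_prod_type]
  rfl

lemma star_dotProduct_self_eq_sum_norm_sq {ι : Type*} [Fintype ι] (v : ι → ℂ) :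
    star v ⬝ᵥ v = ((∑ x, ‖v x‖ ^ 2 : ℝ) : ℂ) := by
  push_cast
  exact sum_congr rfl fun x _ => Complex.conj_mul' (v x)

lemma sum_add_sq_le {ι : Type*} (s : Finset ι) {A B : ι → ℝ} {c α β : ℝ} (hc : 0 ≤ c)
    (hα : 0 ≤ α) (hβ : 0 ≤ β) (hA : ∑ i ∈ s, A i ^ 2 ≤ c * α ^ 2)
    (hB : ∑ i ∈ s, B i ^ 2 ≤ c * β ^ 2) :
    ∑ i ∈ s, (A i + B i) ^ 2 ≤ c * (α + β) ^ 2 := by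
  have hAB : ∑ i ∈ s, A i * B i ≤ c * α * β := by
    refine abs_le_of_sq_le_sq' ?_ (by positivity) |>.2
    calc (∑ i ∈ s, A i * B i) ^ 2 ≤ (∑ i ∈ s, A i ^ 2) * ∑ i ∈ s, B i ^ 2 :=
          sum_mul_sq_le_sq_mul_sq s A B
      _ ≤ (c * α ^ 2) * (c * β ^ 2) :=
          mul_le_mul hA hB (sum_nonneg fun _ _ => sq_nonneg _) (by positivity)
      _ = (c * α * β) ^ 2 := by ring
  have hexpand : ∑ i ∈ s, (A i + B i) ^ 2 =
      ∑ i ∈ s, A i ^ 2 + 2 * ∑ i ∈ s, A i * B i + ∑ i ∈ s, B i ^ 2 := by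
    simp only [add_sq, sum_add_distrib, mul_sum, mul_assoc]
  rw [hexpand]
  nlinarith

lemma prodState_cons {N : ℕ} (s : Fin 6) (f : Fin N → Fin 6) (a : Fin 2) (x : Fin N → Fin 2) :
    prodState (Fin.cons s f : Fin (N + 1) → Fin 6) (Fin.cons a x) = qs s a * prodState f x := by
  simp [prodState, Fin.prod_univ_succ]

lemma star_dotProduct_prodState_cons {N : ℕ} (v : (Fin (N + 1) → Fin 2) → ℂ) (s : Fin 6)
    (f : Fin N → Fin 6) :
    star v ⬝ᵥ prodState (Fin.cons s f : Fin (N + 1) → Fin 6) =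
      qs s ⬝ᵥ fun a => star (fun x => v (Fin.cons a x)) ⬝ᵥ prodState f := by
  simp only [dotProduct, sum_pi_fin_succ, prodState_cons, mul_sum, Pi.star_apply]
  refine sum_congr rfl fun a _ => sum_congr rfl fun x _ => ?_
  ring

lemma sum_norm_qs_dotProduct_pow_four (w : Fin 2 → ℂ) :
    ∑ s, ‖qs s ⬝ᵥ w‖ ^ 4 = 2 * (∑ a, ‖w a‖ ^ 2) ^ 2 := by
  have h4 : Real.sqrt 2 ^ 4 = 4 := by
    rw [show 4 = 2 * 2 from rfl, pow_mul, Real.sq_sqrt zero_le_two]; norm_num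
  simp only [Fin.sum_univ_six, Fin.sum_univ_two, dotProduct, qs, ← Complex.normSq_eq_norm_sq,
    show (4 : ℕ) = 2 * 2 from rfl, pow_mul]
  simp only [Fin.isValue, Matrix.cons_val_zero, Matrix.cons_val_one, Matrix.cons_val_fin_one,
    Complex.normSq_apply, Complex.add_re, Complex.mul_re, Complex.inv_re, Complex.ofReal_re,
    Nat.ofNat_nonneg, Real.mul_self_sqrt, Complex.ofReal_im, mul_zero, add_zero, Complex.inv_im,
    neg_zero, zero_div, zero_mul, sub_zero, Complex.add_im, Complex.mul_im, neg_mul, Complex.neg_re,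
    Complex.neg_im, Complex.I_re, Complex.I_im, sub_self, one_mul, zero_add, zero_sub, neg_neg]
  field_simp
  rw [h4]
  ring

theorem sum_norm_star_dotProduct_prodState_pow_four_le (N : ℕ) (v : (Fin N → Fin 2) → ℂ) :
    ∑ f, ‖star v ⬝ᵥ prodState f‖ ^ 4 ≤ 2 ^ N * (∑ x, ‖v x‖ ^ 2) ^ 2 := by
  induction N with
  | zero => simp [dotProduct, prodState, ← pow_mul]
  | succ N ih =>
    set w : Fin 2 → (Fin N → Fin 2) → ℂ := fun a x => v (Fin.cons a x)
    set prob : Fin 2 → (Fin N → Fin 6) → ℝ := fun a f => ‖star (w a) ⬝ᵥ prodState f‖ ^ 2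
    calc ∑ f, ‖star v ⬝ᵥ prodState f‖ ^ 4
        = ∑ f, ∑ s, ‖qs s ⬝ᵥ fun a => star (w a) ⬝ᵥ prodState f‖ ^ 4 := by
          rw [sum_pi_fin_succ, sum_comm]
          simp only [star_dotProduct_prodState_cons, w]
      _ = 2 * ∑ f, (prob 0 f + prob 1 f) ^ 2 := by
          simp only [sum_norm_qs_dotProduct_pow_four, Fin.sum_univ_two, mul_sum, prob]
      _ ≤ 2 * (2 ^ N * (∑ x, ‖w 0 x‖ ^ 2 + ∑ x, ‖w 1 x‖ ^ 2) ^ 2) := by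
          gcongr
          refine sum_add_sq_le _ (by positivity) (by positivity) (by positivity) ?_ ?_ <;>
            simpa only [prob, ← pow_mul] using ih _
      _ = 2 ^ (N + 1) * (∑ x, ‖v x‖ ^ 2) ^ 2 := by
          rw [sum_pi_fin_succ (fun x => ‖v x‖ ^ 2), Fin.sum_univ_two, pow_succ]
          ring

lemma four_pow_div_six_rpow_eq (N : ℕ) (δ : ℝ) :
    (4 : ℝ) ^ N / (6 : ℝ) ^ ((N : ℝ) * (1 - δ)) = ((2 / 3 : ℝ) * (6 : ℝ) ^ δ) ^ N := by
  rw [div_eq_iff (by positivity), mul_comm (N : ℝ), Real.rpow_mul (by norm_num),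
    Real.rpow_natCast, ← mul_pow, mul_assoc, ← Real.rpow_add (by norm_num), add_sub_cancel,
    Real.rpow_one]
  norm_num

theorem average_inverse_effective_dimension_over_subset_le_general (N : ℕ)
    (T : Finset (Fin N → Fin 6))
    (b : (Fin N → Fin 2) → ((Fin N → Fin 2) → ℂ))
    (hb : ∀ j k, star (b j) ⬝ᵥ b k = if j = k then 1 else 0) :
    (T.card : ℝ)⁻¹ * (∑ f ∈ T, ∑ j : Fin N → Fin 2, ‖star (b j) ⬝ᵥ prodState f‖ ^ 4)
        ≤ (4 : ℝ) ^ N / T.card ∧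
      ∀ δ : ℝ, 0 < δ → (2 / 3 : ℝ) * (6 : ℝ) ^ δ < 1 →
        (6 : ℝ) ^ ((N : ℝ) * (1 - δ)) ≤ T.card →
        (T.card : ℝ)⁻¹ * (∑ f ∈ T, ∑ j : Fin N → Fin 2, ‖star (b j) ⬝ᵥ prodState f‖ ^ 4)
          ≤ ((2 / 3 : ℝ) * (6 : ℝ) ^ δ) ^ N := by
  have hunit (j : Fin N → Fin 2) : ∑ x, ‖b j x‖ ^ 2 = 1 := by
    have h := hb j j
    rw [if_pos rfl, star_dotProduct_self_eq_sum_norm_sq] at h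
    exact_mod_cast h
  have hsum : ∑ f ∈ T, ∑ j : Fin N → Fin 2, ‖star (b j) ⬝ᵥ prodState f‖ ^ 4 ≤ 4 ^ N :=
    calc ∑ f ∈ T, ∑ j : Fin N → Fin 2, ‖star (b j) ⬝ᵥ prodState f‖ ^ 4
        ≤ ∑ f, ∑ j : Fin N → Fin 2, ‖star (b j) ⬝ᵥ prodState f‖ ^ 4 :=
          sum_le_sum_of_subset_of_nonneg (subset_univ T) fun _ _ _ => by positivity
      _ = ∑ j : Fin N → Fin 2, ∑ f, ‖star (b j) ⬝ᵥ prodState f‖ ^ 4 := sum_comm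
      _ ≤ ∑ _j : Fin N → Fin 2, (2 : ℝ) ^ N := sum_le_sum fun j _ => by
          simpa [hunit] using sum_norm_star_dotProduct_prodState_pow_four_le N (b j)
      _ = 4 ^ N := by simp [← mul_pow]; norm_num
  have hfirst : (T.card : ℝ)⁻¹ * (∑ f ∈ T, ∑ j : Fin N → Fin 2, ‖star (b j) ⬝ᵥ prodState f‖ ^ 4)
      ≤ 4 ^ N / T.card := by
    rw [inv_mul_eq_div]; gcongr
  refine ⟨hfirst, fun δ _ _ hT => hfirst.trans ?_⟩
  rw [← four_pow_div_six_rpow_eq]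
  gcongr

/-- For any nonempty subset `T ⊆ S` and any orthonormal basis `{|j⟩}` of `(ℂ²)^{⊗N}`, the
average over `|ψ⟩ ∈ T` of `Σ_j |⟨j|ψ⟩|⁴` is at most `(6^N/|T|)·(2/3)^N = 4^N/|T|`.
In particular, if `|T| ≥ 6^{N(1−δ)}` with constant `δ > 0` satisfying `(2/3)·6^δ < 1`,
then the average is at most `((2/3)·6^δ)^N`. -/
theorem average_inverse_effective_dimension_over_subset_le (N : ℕ)
    (T : Finset (Fin N → Fin 6)) (hT : T.Nonempty)
    (b : (Fin N → Fin 2) → ((Fin N → Fin 2) → ℂ))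
    (hb : ∀ j k, star (b j) ⬝ᵥ b k = if j = k then 1 else 0) :
    (T.card : ℝ)⁻¹ * (∑ f ∈ T, ∑ j : Fin N → Fin 2, ‖star (b j) ⬝ᵥ prodState f‖ ^ 4)
        ≤ (4 : ℝ) ^ N / T.card ∧
      ∀ δ : ℝ, 0 < δ → (2 / 3 : ℝ) * (6 : ℝ) ^ δ < 1 →
        (6 : ℝ) ^ ((N : ℝ) * (1 - δ)) ≤ T.card →
        (T.card : ℝ)⁻¹ * (∑ f ∈ T, ∑ j : Fin N → Fin 2, ‖star (b j) ⬝ᵥ prodState f‖ ^ 4)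
          ≤ ((2 / 3 : ℝ) * (6 : ℝ) ^ δ) ^ N :=
  average_inverse_effective_dimension_over_subset_le_general N T b hb
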